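/- Let R be a square in ℂ, let A ⊆ R be a nonempty closed subset, and let F be a family of squares contained in R such that for every a ∈ A there is a δ > 0 such that every square S ⊆ R with a ∈ S and diam(S) < δ belongs to F. Then there exists a finite subfamily G ⊆ F whose members have pairwise disjoint interiors and whose union covers A. -/

import Mathlib

open Set

/-- The (closed) square with lower-left corner `x + yi` and side length `s`. -/
def closedSquare (x y s : ℝ) : Set ℂ :=
  {z : ℂ | z.re ∈ Icc x (x + s) ∧ z.im ∈ Icc y (y + s)}

/-!
Bisection. Call a square `Q` good if `A ∩ Q` is covered by finitely many members of `F` lying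
in `Q` with pairwise disjoint interiors. Goodness passes from the four quadrants of a square to
the square, so if `R` were bad there would be a nested sequence of bad squares of side `s₀ / 2ⁿ`,
each meeting `A`. By compactness they share a point `z ∈ A`, and once the side is small compared
with the `δ` of `z`, the square itself belongs to `F`, hence is good.
-/

open Complex Function

theorem exists_seq_of_forall_exists_succ {α : Type*} {p : ℕ → α → Prop} {r : α → α → Prop}
    (h : ∀ n a, p n a → ∃ b, p (n + 1) b ∧ r a b) {a : α} (ha : p 0 a) :
    ∃ f : ℕ → α, f 0 = a ∧ ∀ n, p n (f n) ∧ r (f n) (f (n + 1)) := by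
  choose! g hg using h
  let f : ℕ → α := fun n => Nat.rec a g n
  have hf : ∀ n, p n (f n) := fun n => by
    induction n with
    | zero => exact ha
    | succ n ih => exact (hg n (f n) ih).1
  exact ⟨f, rfl, fun n => ⟨hf n, (hg n (f n) (hf n)).2⟩⟩

section Coverable

variable {X : Type*} [TopologicalSpace X]

def FinitelyCoverable (F : Set (Set X)) (A Q : Set X) : Prop :=
  ∃ G ⊆ F, G.Finite ∧ G.Pairwise (Disjoint on interior) ∧ A ∩ Q ⊆ ⋃₀ G ∧ ∀ S ∈ G, S ⊆ Q

variable {F : Set (Set X)} {A Q : Set X}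

theorem finitelyCoverable_of_mem (hQ : Q ∈ F) : FinitelyCoverable F A Q :=
  ⟨{Q}, singleton_subset_iff.2 hQ, finite_singleton Q, pairwise_singleton _ _,
    fun _ hz => ⟨Q, rfl, hz.2⟩, fun _ hS => (mem_singleton_iff.1 hS).le⟩

theorem nonempty_inter_of_not_finitelyCoverable (h : ¬FinitelyCoverable F A Q) :
    (A ∩ Q).Nonempty := by
  by_contra hAQ
  refine h ⟨∅, empty_subset F, finite_empty, pairwise_empty _, ?_, fun _ hS => hS.elim⟩
  rw [not_nonempty_iff_eq_empty.1 hAQ]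
  exact empty_subset _

theorem finitelyCoverable_iUnion {ι : Type*} [Finite ι] {Q : ι → Set X}
    (hQ : Pairwise (Disjoint on fun i => interior (Q i)))
    (h : ∀ i, FinitelyCoverable F A (Q i)) : FinitelyCoverable F A (⋃ i, Q i) := by
  choose G hGF hGfin hGdisj hGcov hGQ using h
  refine ⟨⋃ i, G i, iUnion_subset hGF, finite_iUnion hGfin, ?_, ?_, ?_⟩
  · simp only [Set.Pairwise, mem_iUnion]
    rintro S ⟨i, hS⟩ T ⟨j, hT⟩ hST
    obtain rfl | hij := eq_or_ne i j
    · exact hGdisj i hS hT hST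
    · exact (hQ hij).mono (interior_mono (hGQ i S hS)) (interior_mono (hGQ j T hT))
  · rw [inter_iUnion]
    exact iUnion_subset fun i => (hGcov i).trans (sUnion_mono (subset_iUnion G i))
  · simp only [mem_iUnion]
    rintro S ⟨i, hS⟩
    exact (hGQ i S hS).trans (subset_iUnion Q i)

end Coverable

theorem iUnion_reProdIm {ι κ : Type*} (s : ι → Set ℝ) (t : κ → Set ℝ) :
    ⋃ p : ι × κ, s p.1 ×ℂ t p.2 = (⋃ i, s i) ×ℂ (⋃ j, t j) := by
  ext z
  simp [mem_reProdIm]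

theorem pairwise_disjoint_reProdIm {ι κ : Type*} {s : ι → Set ℝ} {t : κ → Set ℝ}
    (hs : Pairwise (Disjoint on s)) (ht : Pairwise (Disjoint on t)) :
    Pairwise (Disjoint on fun p : ι × κ => s p.1 ×ℂ t p.2) := by
  rintro ⟨i, j⟩ ⟨i', j'⟩ hne
  rcases eq_or_ne i i' with rfl | hi
  · exact ((ht fun hj => hne (congrArg (Prod.mk i) hj)).preimage im).inter_left' _ |>.inter_right' _
  · exact ((hs hi).preimage re).inter_right _ |>.inter_left _

theorem iUnion_Icc_halves (x s : ℝ) (hs : 0 ≤ s) :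
    ⋃ a : Fin 2, Icc (x + a * (s / 2)) (x + a * (s / 2) + s / 2) = Icc x (x + s) := by
  ext u
  simp only [mem_iUnion, Fin.exists_fin_two, mem_Icc, Fin.val_zero, Fin.val_one, Nat.cast_zero,
    Nat.cast_one, zero_mul, one_mul, add_zero]
  constructor
  · rintro (h | h) <;> constructor <;> linarith
  · intro h
    rcases le_total u (x + s / 2) with hu | hu
    · exact Or.inl ⟨h.1, hu⟩
    · exact Or.inr ⟨hu, by linarith⟩

theorem pairwise_disjoint_Ioo_halves (x s : ℝ) :
    Pairwise (Disjoint on fun a : Fin 2 => Ioo (x + a * (s / 2)) (x + a * (s / 2) + s / 2)) := by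
  intro a b hab
  rw [onFun, Set.disjoint_left]
  fin_cases a <;> fin_cases b <;> simp at hab ⊢ <;> intros <;> linarith

theorem closedSquare_eq_reProdIm (x y s : ℝ) :
    closedSquare x y s = Icc x (x + s) ×ℂ Icc y (y + s) := rfl

theorem interior_closedSquare (x y s : ℝ) :
    interior (closedSquare x y s) = Ioo x (x + s) ×ℂ Ioo y (y + s) := by
  rw [closedSquare_eq_reProdIm, interior_reProdIm, interior_Icc, interior_Icc]

theorem isCompact_closedSquare (x y s : ℝ) : IsCompact (closedSquare x y s) :=
  isCompact_Icc.reProdIm isCompact_Icc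

theorem diam_closedSquare_le (x y : ℝ) {s : ℝ} (hs : 0 ≤ s) :
    Metric.diam (closedSquare x y s) ≤ 2 * s := by
  refine Metric.diam_le_of_forall_dist_le (by positivity) fun a ha b hb => ?_
  calc dist a b ≤ |a.re - b.re| + |a.im - b.im| := by
        simpa [dist_eq] using norm_le_abs_re_add_abs_im (a - b)
    _ ≤ (x + s - x) + (y + s - y) :=
        add_le_add (Real.dist_le_of_mem_Icc ha.1 hb.1) (Real.dist_le_of_mem_Icc ha.2 hb.2)
    _ = 2 * s := by ring

def quadrant (x y s : ℝ) (q : Fin 2 × Fin 2) : Set ℂ :=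
  closedSquare (x + q.1 * (s / 2)) (y + q.2 * (s / 2)) (s / 2)

theorem iUnion_quadrant (x y : ℝ) {s : ℝ} (hs : 0 ≤ s) :
    ⋃ q, quadrant x y s q = closedSquare x y s := by
  simp only [quadrant, closedSquare_eq_reProdIm]
  rw [iUnion_reProdIm (fun a : Fin 2 => Icc (x + a * (s / 2)) (x + a * (s / 2) + s / 2))
    (fun b : Fin 2 => Icc (y + b * (s / 2)) (y + b * (s / 2) + s / 2)),
    iUnion_Icc_halves x s hs, iUnion_Icc_halves y s hs]

theorem pairwise_disjoint_interior_quadrant (x y s : ℝ) :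
    Pairwise (Disjoint on fun q => interior (quadrant x y s q)) := by
  simp only [quadrant, interior_closedSquare]
  exact pairwise_disjoint_reProdIm (pairwise_disjoint_Ioo_halves x s)
    (pairwise_disjoint_Ioo_halves y s)

section Bisection

variable {F : Set (Set ℂ)} {A : Set ℂ}

theorem exists_quadrant_not_finitelyCoverable {x y s : ℝ} (hs : 0 ≤ s)
    (h : ¬FinitelyCoverable F A (closedSquare x y s)) :
    ∃ x' y', closedSquare x' y' (s / 2) ⊆ closedSquare x y s ∧
      ¬FinitelyCoverable F A (closedSquare x' y' (s / 2)) := by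
  rw [← iUnion_quadrant x y hs] at h ⊢
  obtain ⟨q, hq⟩ : ∃ q, ¬FinitelyCoverable F A (quadrant x y s q) := by
    by_contra! hall
    exact h (finitelyCoverable_iUnion (pairwise_disjoint_interior_quadrant x y s) hall)
  exact ⟨_, _, subset_iUnion (quadrant x y s) q, hq⟩

theorem exists_antitone_not_finitelyCoverable {x y s : ℝ} (hs : 0 ≤ s)
    (h : ¬FinitelyCoverable F A (closedSquare x y s)) :
    ∃ Q : ℕ → Set ℂ, Q 0 = closedSquare x y s ∧ Antitone Q ∧
      ∀ n, ¬FinitelyCoverable F A (Q n) ∧ ∃ x' y', Q n = closedSquare x' y' (s / 2 ^ n) := by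
  have step : ∀ n Q, (¬FinitelyCoverable F A Q ∧ ∃ x' y', Q = closedSquare x' y' (s / 2 ^ n)) →
      ∃ Q', (¬FinitelyCoverable F A Q' ∧ ∃ x' y', Q' = closedSquare x' y' (s / 2 ^ (n + 1))) ∧
        Q' ⊆ Q := by
    rintro n _ ⟨hQ, x', y', rfl⟩
    obtain ⟨x'', y'', hsub, hbad⟩ := exists_quadrant_not_finitelyCoverable (by positivity) hQ
    rw [div_div, ← pow_succ] at hsub hbad
    exact ⟨_, ⟨hbad, x'', y'', rfl⟩, hsub⟩
  obtain ⟨Q, hQ0, hQ⟩ := exists_seq_of_forall_exists_succ step ⟨by simpa using h, x, y, by simp⟩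
  exact ⟨Q, hQ0, antitone_nat_of_succ_le fun n => (hQ n).2, fun n => (hQ n).1⟩

end Bisection

theorem vitali_type_covering_finite_general
    (x₀ y₀ s₀ : ℝ) (hs₀ : 0 < s₀) (A : Set ℂ) (hAcl : IsClosed A)
    (hAR : A ⊆ closedSquare x₀ y₀ s₀) (F : Set (Set ℂ))
    (hfine : ∀ a ∈ A, ∃ δ : ℝ, 0 < δ ∧ ∀ x y s : ℝ, 0 < s →
      closedSquare x y s ⊆ closedSquare x₀ y₀ s₀ → a ∈ closedSquare x y s → Metric.diam (closedSquare x y s) < δ →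
      closedSquare x y s ∈ F) :
    ∃ G ⊆ F, G.Finite ∧
      (G.Pairwise fun S T => Disjoint (interior S) (interior T)) ∧
      A ⊆ ⋃₀ G := by
  suffices h : FinitelyCoverable F A (closedSquare x₀ y₀ s₀) by
    obtain ⟨G, hGF, hGfin, hGdisj, hGcov, -⟩ := h
    exact ⟨G, hGF, hGfin, hGdisj, fun z hz => hGcov ⟨hz, hAR hz⟩⟩
  by_contra hbad
  obtain ⟨Q, hQ0, hQanti, hQ⟩ := exists_antitone_not_finitelyCoverable hs₀.le hbad
  obtain ⟨z, hz⟩ : (⋂ n, A ∩ Q n).Nonempty := by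
    refine IsCompact.nonempty_iInter_of_sequence_nonempty_isCompact_isClosed _
      (fun n => inter_subset_inter_right A (hQanti n.le_succ))
      (fun n => nonempty_inter_of_not_finitelyCoverable (hQ n).1)
      (hQ0 ▸ (isCompact_closedSquare x₀ y₀ s₀).inter_left hAcl) fun n => hAcl.inter ?_
    obtain ⟨x, y, hxy⟩ := (hQ n).2
    exact hxy ▸ (isCompact_closedSquare x y _).isClosed
  rw [mem_iInter] at hz
  obtain ⟨δ, hδ, hδF⟩ := hfine z (hz 0).1
  obtain ⟨n, hn⟩ : ∃ n : ℕ, s₀ / 2 ^ n < δ / 2 :=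
    (tendsto_const_nhds.div_atTop (tendsto_pow_atTop_atTop_of_one_lt one_lt_two)).eventually
      (gt_mem_nhds (half_pos hδ)) |>.exists
  obtain ⟨x, y, hQn⟩ := (hQ n).2
  refine (hQ n).1 (hQn ▸ finitelyCoverable_of_mem (hδF x y _ (by positivity) ?_ ?_ ?_))
  · exact hQn ▸ hQ0 ▸ hQanti n.zero_le
  · exact hQn ▸ (hz n).2
  · linarith [diam_closedSquare_le x y (by positivity : 0 ≤ s₀ / 2 ^ n)]

theorem vitali_type_covering_finite
    (x₀ y₀ s₀ : ℝ) (hs₀ : 0 < s₀) (A : Set ℂ) (hA : A.Nonempty) (hAcl : IsClosed A)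
    (hAR : A ⊆ closedSquare x₀ y₀ s₀) (F : Set (Set ℂ))
    (hF : ∀ S ∈ F, (∃ x y s, 0 < s ∧ S = closedSquare x y s) ∧ S ⊆ closedSquare x₀ y₀ s₀)
    (hfine : ∀ a ∈ A, ∃ δ : ℝ, 0 < δ ∧ ∀ x y s : ℝ, 0 < s →
      closedSquare x y s ⊆ closedSquare x₀ y₀ s₀ → a ∈ closedSquare x y s → Metric.diam (closedSquare x y s) < δ →
      closedSquare x y s ∈ F) :
    ∃ G ⊆ F, G.Finite ∧
      (G.Pairwise fun S T => Disjoint (interior S) (interior T)) ∧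
      A ⊆ ⋃₀ G :=
  vitali_type_covering_finite_general x₀ y₀ s₀ hs₀ A hAcl hAR F hfine
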